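/- For every integer h ≥ 3 there exists N₄ ∈ ℕ, depending only on h, such that for all integers N ≥ N₄ and all (b,d) with 0 < b < d for which there exists some mode k with F( cos(2πk/N), T_h(cos(2πk/N)), b, d ) < 0, every integer k* ∈ {0, 1, …, ⌊N/2⌋} at which the function k ↦ F( cos(2πk/N), T_h(cos(2πk/N)), b, d ) attains its minimum over {0, 1, …, ⌊N/2⌋} satisfies ⌈N/(4h)⌉ ≤ k* ≤ ⌈N/(2h)⌉. -/
import Mathlib
set_option maxHeartbeats 1000000


open Real

noncomputable def F (x y b d : ℝ) : ℝ :=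
  -b*d*x^2 + (b*d^2*y - b*(b+d) - d*(b+1)*(b+2*d))*x + b*d*(b+d)*y + (b+1)*(b+d)*(b+2*d)

noncomputable def cheb (h : ℕ) (x : ℝ) : ℝ := (Polynomial.Chebyshev.T ℝ h).eval x

lemma cheb_cos (h : ℕ) (θ : ℝ) : cheb h (cos θ) = cos (h * θ) := by
  unfold cheb
  rw [Polynomial.Chebyshev.T_real_cos θ (h : ℤ)]
  norm_num

lemma F_pos (b d x y : ℝ) (hb : 0 < b) (hbd : b < d) (hx0 : 0 ≤ x) (hx1 : x ≤ 1)
    (hy : 0 ≤ y) : 0 < F x y b d := by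
  have hd : 0 < d := hb.trans hbd
  have key : F x y b d = b*(d*x+b+d)*(d*y)
      + (1-x)*(b*d*(1+x) + b*(b+d) + d*(b+1)*(b+2*d)) + b^2*(b+2*d) := by
    unfold F; ring
  have h1 : 0 ≤ b*(d*x+b+d)*(d*y) := by positivity
  have h2 : 0 ≤ (1-x)*(b*d*(1+x) + b*(b+d) + d*(b+1)*(b+2*d)) := by
    apply mul_nonneg (by linarith)
    have e1 : 0 ≤ b*d*(1+x) := by positivity
    nlinarith [mul_pos hd (mul_pos (show (0:ℝ)<b+1 by linarith) (show (0:ℝ)<b+2*d by linarith)),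
      mul_pos hb (show (0:ℝ)<b+d by linarith)]
  have h3 : 0 < b^2*(b+2*d) := by positivity
  linarith [key, h1, h2, h3]

lemma F_compare (b d x x0 y y0 eps : ℝ) (hb : 0 < b) (hbd : b < d)
    (hx : -1 ≤ x) (hx0u : x0 ≤ 1) (hy : -1 ≤ y) (hy0l : -1 ≤ y0)
    (hy0 : y0 + 1 ≤ eps) (hgap : x + eps < x0) :
    F x0 y0 b d < F x y b d := by
  have hd : 0 < d := hb.trans hbd
  have heps0 : 0 ≤ eps := by linarith
  have hx0l : -1 ≤ x0 := by linarith
  have key : F x y b d - F x0 y0 b d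
      = (y+1)*(b*d*(d*x+b+d))
      + (x0-x)*(b*d*(x+x0) + b*d^2 + b*(b+d) + d*(b+1)*(b+2*d))
      - (y0+1)*(b*d*(d*x0+b+d)) := by
    unfold F; ring
  have hA : 0 ≤ (y+1)*(b*d*(d*x+b+d)) := by
    apply mul_nonneg (by linarith)
    apply mul_nonneg (by positivity)
    nlinarith
  have hB : 3*b*d^2*(x0-x) ≤ (x0-x)*(b*d*(x+x0) + b*d^2 + b*(b+d) + d*(b+1)*(b+2*d)) := by
    have hg : 0 ≤ x0 - x := by linarith
    have hf : 0 ≤ b*d*(x+x0+2) + b^2 + b^2*d + 2*d^2 := by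
      have : 0 ≤ x + x0 + 2 := by linarith
      positivity
    nlinarith [mul_nonneg hg hf]
  have hC : (y0+1)*(b*d*(d*x0+b+d)) ≤ eps*(3*b*d^2) := by
    have h1 : 0 ≤ y0 + 1 := by linarith
    have h3 : 0 ≤ b*d*(d*x0+b+d) := by
      apply mul_nonneg (by positivity); nlinarith
    have h4 : b*d*(d*x0+b+d) ≤ 3*b*d^2 := by
      have h5 : 0 ≤ b*d*(d*(1-x0) + (d-b)) :=
        mul_nonneg (mul_pos hb hd).le (by nlinarith)
      nlinarith [h5]
    calc (y0+1)*(b*d*(d*x0+b+d)) ≤ eps*(b*d*(d*x0+b+d)) := by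
          exact mul_le_mul_of_nonneg_right hy0 h3
      _ ≤ eps*(3*b*d^2) := by exact mul_le_mul_of_nonneg_left h4 heps0
  have hpos : eps*(3*b*d^2) < 3*b*d^2*(x0-x) := by
    have hdiff : 0 < x0 - x - eps := by linarith
    nlinarith [mul_pos (show (0:ℝ) < 3*b*d^2 by positivity) hdiff]
  linarith [key, hA, hB, hC, hpos]

lemma cos_reduce (N k : ℕ) (hN : 0 < N) :
    ∃ k' : ℕ, k' ≤ N / 2 ∧ cos (2*π*(k':ℝ)/N) = cos (2*π*(k:ℝ)/N) := by
  have hNR : (0:ℝ) < N := by exact_mod_cast hN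
  set m := k % N with hm
  have hmN : m < N := Nat.mod_lt _ hN
  have hcast : (k:ℝ) = (m:ℝ) + (N:ℝ) * ((k / N : ℕ):ℝ) := by
    have h0 := Nat.mod_add_div k N
    have h1 := congrArg (fun n : ℕ => (n:ℝ)) h0
    push_cast at h1
    linarith
  have hcm : cos (2*π*(m:ℝ)/N) = cos (2*π*(k:ℝ)/N) := by
    have harg : 2*π*(k:ℝ)/N = 2*π*(m:ℝ)/N + ((k / N : ℕ):ℝ) * (2*π) := by
      rw [hcast]; field_simp
    rw [harg]
    have h2 := Real.cos_add_int_mul_two_pi (2*π*(m:ℝ)/N) ((k / N : ℕ):ℤ)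
    exact_mod_cast h2.symm
  by_cases hle : m ≤ N / 2
  · exact ⟨m, hle, hcm⟩
  · refine ⟨N - m, by omega, ?_⟩
    rw [← hcm]
    have harg : 2*π*((N - m : ℕ):ℝ)/N = 2*π - 2*π*(m:ℝ)/N := by
      rw [Nat.cast_sub hmN.le]; field_simp
    rw [harg, Real.cos_two_pi_sub]

/-- Theorem (continuous bifurcation, most unstable mode): for `h ≥ 3` there is `N₄` such
that for all `N ≥ N₄` and all `(b,d) ∈ P` admitting an unstable mode, every minimizer
`k*` over `{0,…,⌊N/2⌋}` of the mode-stability function satisfies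
`⌈N/(4h)⌉ ≤ k* ≤ ⌈N/(2h)⌉`. -/
theorem continuous_bifurcation_most_unstable_mode (h : ℕ) (hh : 3 ≤ h) :
    ∃ N₄ : ℕ, ∀ N : ℕ, N₄ ≤ N →
      ∀ b d : ℝ, 0 < b → b < d →
        (∃ k : ℕ, F (cos (2*π*k/N)) (cheb h (cos (2*π*k/N))) b d < 0) →
        ∀ kstar : ℕ, kstar ≤ N / 2 →
          (∀ k : ℕ, k ≤ N / 2 →
            F (cos (2*π*kstar/N)) (cheb h (cos (2*π*kstar/N))) b d ≤
              F (cos (2*π*k/N)) (cheb h (cos (2*π*k/N))) b d) →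
          ⌈(N : ℝ)/(4*h)⌉ ≤ (kstar : ℤ) ∧ (kstar : ℤ) ≤ ⌈(N : ℝ)/(2*h)⌉ := by
  refine ⟨1000 * h^3, ?_⟩
  intro N hN b d hb hbd hex kstar hks2 hmin
  have hd : 0 < d := hb.trans hbd
  have hh1 : (3:ℝ) ≤ (h:ℝ) := by exact_mod_cast hh
  have hhp : (0:ℝ) < h := by linarith
  have hN27 : 27000 ≤ N := by
    have h27 : 27 ≤ h^3 := by
      calc 27 = 3^3 := by norm_num
        _ ≤ h^3 := Nat.pow_le_pow_left hh 3
    calc 27000 = 1000 * 27 := by norm_num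
      _ ≤ 1000 * h^3 := by omega
      _ ≤ N := hN
  have hN0 : 0 < N := by omega
  have hNR : (0:ℝ) < N := by exact_mod_cast hN0
  have hNbig : (27000:ℝ) ≤ N := by exact_mod_cast hN27
  have hNreal : 1000*(h:ℝ)^3 ≤ N := by exact_mod_cast hN
  -- negativity at the minimizer
  obtain ⟨k, hk⟩ := hex
  obtain ⟨k', hk'le, hk'cos⟩ := cos_reduce N k hN0
  rw [← hk'cos] at hk
  have hneg : F (cos (2*π*kstar/N)) (cheb h (cos (2*π*kstar/N))) b d < 0 :=
    lt_of_le_of_lt (hmin k' hk'le) hk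
  constructor
  · -- lower bound
    by_contra hcon
    push_neg at hcon
    have hksr : (kstar:ℝ) < (N:ℝ)/(4*h) := by
      have h1 : (((kstar:ℤ) + 1 : ℤ):ℝ) ≤ ((⌈(N:ℝ)/(4*h)⌉ : ℤ):ℝ) := by
        exact_mod_cast hcon
      have h2 := Int.ceil_lt_add_one ((N:ℝ)/(4*h))
      push_cast at h1
      linarith
    set θ := 2*π*(kstar:ℝ)/N with hθd
    have hθ0 : 0 ≤ θ := by positivity
    have hθu : θ < π/(2*h) := by
      rw [hθd, div_lt_div_iff₀ hNR (by positivity)]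
      have h4 : (kstar:ℝ)*(4*h) < N := by
        rw [lt_div_iff₀ (by positivity)] at hksr; linarith
      linarith [mul_lt_mul_of_pos_left h4 pi_pos]
    have hθπ2 : θ ≤ π/2 := by
      have : π/(2*(h:ℝ)) ≤ π/2 := by
        rw [div_le_div_iff₀ (by positivity) (by norm_num)]
        linarith [mul_le_mul_of_nonneg_left hh1 pi_pos.le, pi_pos]
      linarith
    have hx0 : 0 ≤ cos θ := Real.cos_nonneg_of_mem_Icc ⟨by linarith [pi_pos], hθπ2⟩
    have hhθ : (h:ℝ)*θ ≤ π/2 := by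
      calc (h:ℝ)*θ ≤ (h:ℝ)*(π/(2*h)) := mul_le_mul_of_nonneg_left hθu.le hhp.le
        _ = π/2 := by field_simp
    have hy0 : 0 ≤ cos ((h:ℝ)*θ) := by
      apply Real.cos_nonneg_of_mem_Icc
      constructor
      · have : 0 ≤ (h:ℝ)*θ := by positivity
        linarith [pi_pos]
      · exact hhθ
    rw [cheb_cos] at hneg
    exact absurd hneg (not_lt.mpr (F_pos b d _ _ hb hbd hx0 (Real.cos_le_one θ) hy0).le)
  · -- upper bound
    by_contra hcon
    push_neg at hcon
    set c := ⌈(N:ℝ)/(2*h)⌉ with hcd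
    have hcpos : 0 < c := Int.ceil_pos.mpr (by positivity)
    set k0 := c.toNat with hk0d
    have hk0c : (k0:ℤ) = c := Int.toNat_of_nonneg hcpos.le
    have hk0r : ((k0:ℕ):ℝ) = ((c:ℤ):ℝ) := by exact_mod_cast hk0c
    have hlb : (N:ℝ)/(2*h) ≤ k0 := by rw [hk0r]; exact Int.le_ceil _
    have hub : (k0:ℝ) < (N:ℝ)/(2*h) + 1 := by rw [hk0r]; exact Int.ceil_lt_add_one _
    have hb1 : π*(N:ℝ) ≤ 2*π*k0*h := by
      have h1 : (N:ℝ) ≤ k0*(2*h) := (div_le_iff₀ (by positivity)).mp hlb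
      linarith [mul_le_mul_of_nonneg_left h1 pi_pos.le]
    have hb2 : 2*π*(k0:ℝ)*h ≤ π*N + 2*π*h := by
      have e : (N:ℝ)/(2*h)*(2*h) = N := by field_simp
      have h1 : (k0:ℝ)*(2*h) < N + 2*h := by nlinarith
      linarith [mul_lt_mul_of_pos_left h1 pi_pos]
    have h2k0 : 2*k0 ≤ N := by
      have e1 : (N:ℝ)/(2*h) ≤ N/6 := by
        rw [div_le_div_iff₀ (by positivity) (by norm_num)]
        linarith [mul_le_mul_of_nonneg_left (show (6:ℝ) ≤ 2*h by linarith) hNR.le]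
      have h1 : ((2*k0 : ℕ):ℝ) < N := by push_cast; linarith
      have := h1.le
      exact_mod_cast this
    have hk0half : k0 ≤ N/2 := by omega
    have hksge : k0 + 1 ≤ kstar := by
      have h1 : (k0:ℤ) < kstar := by rw [hk0c]; exact hcon
      have : k0 < kstar := by exact_mod_cast h1
      omega
    set θ0 := 2*π*(k0:ℝ)/N with hθ0d
    set θs := 2*π*(kstar:ℝ)/N with hθsd
    have hθ0l : π/(h:ℝ) ≤ θ0 := by
      rw [hθ0d, div_le_div_iff₀ hhp hNR]
      linarith [hb1]
    have hθ0u : θ0 ≤ π/(h:ℝ) + 2*π/N := by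
      rw [hθ0d, div_add_div _ _ (ne_of_gt hhp) (ne_of_gt hNR),
        div_le_div_iff₀ hNR (by positivity)]
      linarith [mul_le_mul_of_nonneg_right hb2 hNR.le]
    have hsl : π ≤ (h:ℝ)*θ0 := by
      have e : (h:ℝ)*θ0 = (2*π*k0*h)/N := by rw [hθ0d]; ring
      rw [e, le_div_iff₀ hNR]; linarith
    have hsu : (h:ℝ)*θ0 ≤ π + 2*π*h/N := by
      have e : (h:ℝ)*θ0 = (2*π*k0*h)/N := by rw [hθ0d]; ring
      have e2 : π + 2*π*(h:ℝ)/N = (π*N + 2*π*h)/N := by field_simp; try ring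
      rw [e, e2]
      gcongr
    set y0 := cheb h (cos θ0) with hy0d
    have hy0cos : y0 = cos ((h:ℝ)*θ0) := cheb_cos h θ0
    set eps := 2*π^2*(h:ℝ)^2/(N:ℝ)^2 with hepsd
    have hy0eps : y0 + 1 ≤ eps := by
      set s := (h:ℝ)*θ0 - π with hsd
      have hcos : cos ((h:ℝ)*θ0) = -cos s := by
        rw [show (h:ℝ)*θ0 = π + s by rw [hsd]; ring, Real.cos_add, Real.cos_pi, Real.sin_pi]
        ring
      have h1 : 1 - s^2/2 ≤ cos s := Real.one_sub_sq_div_two_le_cos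
      have hs0 : 0 ≤ s := by rw [hsd]; linarith
      have hsu2 : s ≤ 2*π*h/N := by rw [hsd]; linarith
      have h2 : s^2 ≤ (2*π*(h:ℝ)/N)^2 := pow_le_pow_left₀ hs0 hsu2 2
      have e : (2*π*(h:ℝ)/N)^2/2 = eps := by rw [hepsd]; field_simp
      rw [hy0cos, hcos]
      linarith
    have hθsl : θ0 + 2*π/N ≤ θs := by
      rw [hθ0d, hθsd]
      have e : 2*π*(k0:ℝ)/N + 2*π/N = (2*π*((k0:ℝ)+1))/N := by field_simp
      rw [e]
      have h1 : ((k0:ℝ)+1) ≤ kstar := by exact_mod_cast hksge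
      gcongr
    have hθsu : θs ≤ π := by
      rw [hθsd, div_le_iff₀ hNR]
      have h2ks : ((2*kstar : ℕ):ℝ) ≤ N := by exact_mod_cast (by omega : 2*kstar ≤ N)
      push_cast at h2ks
      linarith [mul_le_mul_of_nonneg_left h2ks pi_pos.le]
    have hmono : cos θs ≤ cos (θ0 + 2*π/N) :=
      Real.cos_le_cos_of_nonneg_of_le_pi (by positivity) hθsu hθsl
    have hgapeq : cos θ0 - cos (θ0 + 2*π/N) = 2 * sin (θ0 + π/N) * sin (π/N) := by
      rw [Real.cos_sub_cos,
        show (θ0 + (θ0 + 2*π/N))/2 = θ0 + π/N by ring,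
        show (θ0 - (θ0 + 2*π/N))/2 = -(π/N) by ring, Real.sin_neg]
      ring
    have hsinN : 2/(N:ℝ) ≤ sin (π/N) := by
      have h1 := Real.mul_le_sin (x := π/(N:ℝ)) (by positivity)
        (by rw [div_le_div_iff₀ hNR (by norm_num)]
            linarith [mul_le_mul_of_nonneg_left hNbig pi_pos.le, pi_pos])
      have e : 2/π*(π/(N:ℝ)) = 2/N := by field_simp; try ring
      rw [e] at h1; exact h1
    have hargu : θ0 + π/N ≤ π/2 := by
      have e1 : π/(h:ℝ) ≤ π/3 := by
        rw [div_le_div_iff₀ hhp (by norm_num)]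
        linarith [mul_le_mul_of_nonneg_left hh1 pi_pos.le]
      have e2 : 3*π/(N:ℝ) ≤ π/6 := by
        rw [div_le_div_iff₀ hNR (by norm_num)]
        linarith [mul_le_mul_of_nonneg_left hNbig pi_pos.le, pi_pos]
      have e3 : 2*π/(N:ℝ) + π/N = 3*π/N := by ring
      linarith
    have hsinθ : 2/(h:ℝ) ≤ sin (θ0 + π/N) := by
      have hge : π/(h:ℝ) ≤ θ0 + π/N := by
        have : (0:ℝ) ≤ π/(N:ℝ) := by positivity
        linarith
      have h1 := Real.mul_le_sin (x := θ0 + π/N) (by positivity) hargu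
      have e : 2/π*(π/(h:ℝ)) = 2/h := by field_simp; try ring
      have mono : 2/π*(π/(h:ℝ)) ≤ 2/π*(θ0 + π/N) :=
        mul_le_mul_of_nonneg_left hge (by positivity)
      linarith
    have hgap : 8/((h:ℝ)*N) ≤ cos θ0 - cos θs := by
      have hsθ0 : (0:ℝ) ≤ 2/(h:ℝ) := by positivity
      have hsN0 : (0:ℝ) ≤ 2/(N:ℝ) := by positivity
      have hprod : (2/(h:ℝ))*(2/(N:ℝ)) ≤ sin (θ0 + π/N) * sin (π/N) :=
        mul_le_mul hsinθ hsinN hsN0 (le_trans hsθ0 hsinθ)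
      have e : 2*((2/(h:ℝ))*(2/(N:ℝ))) = 8/(h*N) := by ring
      linarith [hgapeq, hmono]
    have hepslt : eps < 8/((h:ℝ)*N) := by
      rw [hepsd, div_lt_div_iff₀ (by positivity) (by positivity)]
      have hπ2 : π^2 ≤ 16 := by nlinarith [Real.pi_le_four, pi_pos]
      have hcube : (0:ℝ) < (h:ℝ)^3*N := by positivity
      have h1 : 2*π^2*((h:ℝ)^3*N) ≤ 32*((h:ℝ)^3*N) :=
        mul_le_mul_of_nonneg_right (by linarith) hcube.le
      have h2 := mul_le_mul_of_nonneg_right hNreal (by positivity : (0:ℝ) ≤ 8*N)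
      linarith [hcube, h1, h2]
    have hcomp := F_compare b d (cos θs) (cos θ0) (cheb h (cos θs)) y0 eps hb hbd
      (Real.neg_one_le_cos θs) (Real.cos_le_one θ0)
      (by rw [cheb_cos]; exact Real.neg_one_le_cos _)
      (by rw [hy0cos]; exact Real.neg_one_le_cos _) hy0eps (by linarith)
    have hmin0 := hmin k0 hk0half
    rw [← hθ0d] at hmin0
    rw [← hy0d] at hmin0
    linarith
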